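/- arXiv:2011.03285 — 8 statements merged into one kernel-verified Lean document; each statement's English description precedes it below -/
import Mathlib

section
/- Suppose the four functions f, g, h, v : ℤ × ℝ → ℂ are differentiable in the time variable t, f(n,t) ≠ 0 for all (n,t), and for all n ∈ ℤ and t ∈ ℝ they satisfy the bilinear system: (i) i(∂ₜg(n,t)·f(n,t) − g(n,t)·∂ₜf(n,t)) = ½[(2n+2)g(n+1,t)f(n−1,t) + (2n−2)g(n−1,t)f(n+1,t) − 4n·g(n,t)f(n,t)] + g(n,t)v(n,t); (ii) i(∂ₜh(n,t)·f(n,t) − h(n,t)·∂ₜf(n,t)) = −½[(2n+2)h(n+1,t)f(n−1,t) + (2n−2)h(n−1,t)f(n+1,t) − 4n·h(n,t)f(n,t)] − h(n,t)v(n,t); (iii) f(n,t)² − f(n−1,t)f(n+1,t) = g(n,t)h(n,t); (iv) v(n+1,t)f(n,t) − v(n,t)f(n+1,t) = −g(n+1,t)h(n,t) − g(n,t)h(n+1,t). Then the functions Q := g/f, R := h/f, u := −v/f satisfy, for all n ∈ ℤ and t ∈ ℝ: i∂ₜQ(n,t) = ½(1 − Q(n,t)R(n,t))[(2n+2)Q(n+1,t)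 + (2n−2)Q(n−1,t)] − 2n·Q(n,t) − Q(n,t)u(n,t); i∂ₜR(n,t) = −½(1 − Q(n,t)R(n,t))[(2n+2)R(n+1,t) + (2n−2)R(n−1,t)] + 2n·R(n,t) + R(n,t)u(n,t); and u(n+1,t) − u(n,t) = Q(n+1,t)R(n,t) + Q(n,t)R(n+1,t). -/
open Complex

/-!
With `Q = g/f`, `R = h/f`, `u = -v/f`, the quotient rule turns the left side of each bilinear
time equation into `f²` times `i ∂ₜQ` (resp. `i ∂ₜR`). Dividing by `f²` and replacing the factor
`f(n-1) f(n+1)` by `f² (1 - QR)`, which is the content of the third bilinear equation, gives the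
evolution equations; dividing the fourth equation by `f(n) f(n+1)` gives the nonlocal relation.
Equation (ii) is equation (i) with `i` replaced by `-i` and `g`, `h` exchanged, so both are one
field identity in which the imaginary unit is an arbitrary scalar `c`.
-/

section FieldIdentities

variable {K : Type*} [Field K]

theorem quotient_evolution_of_bilinear [CharZero K] (k c w : K) (fₚ f fₙ gₚ g gₙ h v : K)
    (hfₚ : fₚ ≠ 0) (hf : f ≠ 0) (hfₙ : fₙ ≠ 0)
    (htime : c * w = 1 / 2 * ((2 * k + 2) * gₙ * fₚ + (2 * k - 2) * gₚ * fₙ - 4 * k * g * f)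
      + g * v)
    (hspace : f ^ 2 - fₚ * fₙ = g * h) :
    c * (w / f ^ 2)
      = 1 / 2 * (1 - g / f * (h / f)) * ((2 * k + 2) * (gₙ / fₙ) + (2 * k - 2) * (gₚ / fₚ))
        - 2 * k * (g / f) - g / f * (-v / f) := by
  field_simp
  linear_combination fₙ * fₚ * htime - ((k + 1) * gₙ * fₚ + (k - 1) * gₚ * fₙ) * hspace

theorem quotient_evolution_of_bilinear_neg [CharZero K] (k c w : K) (fₚ f fₙ g hₚ h hₙ v : K)
    (hfₚ : fₚ ≠ 0) (hf : f ≠ 0) (hfₙ : fₙ ≠ 0)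
    (htime : c * w = -(1 / 2) * ((2 * k + 2) * hₙ * fₚ + (2 * k - 2) * hₚ * fₙ - 4 * k * h * f)
      - h * v)
    (hspace : f ^ 2 - fₚ * fₙ = g * h) :
    c * (w / f ^ 2)
      = -(1 / 2) * (1 - g / f * (h / f)) * ((2 * k + 2) * (hₙ / fₙ) + (2 * k - 2) * (hₚ / fₚ))
        + 2 * k * (h / f) + h / f * (-v / f) := by
  have hneg := quotient_evolution_of_bilinear k (-c) w fₚ f fₙ hₚ h hₙ g v hfₚ hf hfₙ
    (by linear_combination -htime) (hspace.trans (mul_comm g h))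
  linear_combination -hneg

theorem quotient_difference_of_bilinear (f f₁ g g₁ h h₁ v v₁ : K) (hf : f ≠ 0) (hf₁ : f₁ ≠ 0)
    (hdiff : v₁ * f - v * f₁ = -g₁ * h - g * h₁) :
    -v₁ / f₁ - -v / f = g₁ / f₁ * (h / f) + g / f * (h₁ / f₁) := by
  field_simp
  linear_combination -hdiff

end FieldIdentities

theorem bilinearization_of_coupled_sdnNLS_general
    (f g h v : ℤ × ℝ → ℂ)
    (hfd : ∀ n : ℤ, Differentiable ℝ fun t => f (n, t))
    (hgd : ∀ n : ℤ, Differentiable ℝ fun t => g (n, t))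
    (hhd : ∀ n : ℤ, Differentiable ℝ fun t => h (n, t))
    (hfne : ∀ (n : ℤ) (t : ℝ), f (n, t) ≠ 0)
    (heq1 : ∀ (n : ℤ) (t : ℝ),
      Complex.I * (deriv (fun s => g (n, s)) t * f (n, t)
          - g (n, t) * deriv (fun s => f (n, s)) t)
        = (1 / 2) * ((2 * (n : ℂ) + 2) * g (n + 1, t) * f (n - 1, t)
            + (2 * (n : ℂ) - 2) * g (n - 1, t) * f (n + 1, t)
            - 4 * (n : ℂ) * g (n, t) * f (n, t)) + g (n, t) * v (n, t))
    (heq2 : ∀ (n : ℤ) (t : ℝ),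
      Complex.I * (deriv (fun s => h (n, s)) t * f (n, t)
          - h (n, t) * deriv (fun s => f (n, s)) t)
        = -(1 / 2) * ((2 * (n : ℂ) + 2) * h (n + 1, t) * f (n - 1, t)
            + (2 * (n : ℂ) - 2) * h (n - 1, t) * f (n + 1, t)
            - 4 * (n : ℂ) * h (n, t) * f (n, t)) - h (n, t) * v (n, t))
    (heq3 : ∀ (n : ℤ) (t : ℝ),
      f (n, t) ^ 2 - f (n - 1, t) * f (n + 1, t) = g (n, t) * h (n, t))
    (heq4 : ∀ (n : ℤ) (t : ℝ),
      v (n + 1, t) * f (n, t) - v (n, t) * f (n + 1, t)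
        = -g (n + 1, t) * h (n, t) - g (n, t) * h (n + 1, t))
    (Q R u : ℤ × ℝ → ℂ)
    (hQ : ∀ (n : ℤ) (t : ℝ), Q (n, t) = g (n, t) / f (n, t))
    (hR : ∀ (n : ℤ) (t : ℝ), R (n, t) = h (n, t) / f (n, t))
    (hu : ∀ (n : ℤ) (t : ℝ), u (n, t) = -v (n, t) / f (n, t)) :
    (∀ (n : ℤ) (t : ℝ),
      Complex.I * deriv (fun s => Q (n, s)) t
        = (1 / 2) * (1 - Q (n, t) * R (n, t))
            * ((2 * (n : ℂ) + 2) * Q (n + 1, t) + (2 * (n : ℂ) - 2) * Q (n - 1, t))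
          - 2 * (n : ℂ) * Q (n, t) - Q (n, t) * u (n, t))
    ∧ (∀ (n : ℤ) (t : ℝ),
      Complex.I * deriv (fun s => R (n, s)) t
        = -(1 / 2) * (1 - Q (n, t) * R (n, t))
            * ((2 * (n : ℂ) + 2) * R (n + 1, t) + (2 * (n : ℂ) - 2) * R (n - 1, t))
          + 2 * (n : ℂ) * R (n, t) + R (n, t) * u (n, t))
    ∧ (∀ (n : ℤ) (t : ℝ),
      u (n + 1, t) - u (n, t) = Q (n + 1, t) * R (n, t) + Q (n, t) * R (n + 1, t)) := by
  refine ⟨fun n t => ?_, fun n t => ?_, fun n t => ?_⟩ <;> simp only [hQ, hR, hu]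
  · rw [deriv_fun_div (hgd n).differentiableAt (hfd n).differentiableAt (hfne n t)]
    exact quotient_evolution_of_bilinear _ _ _ _ _ _ _ _ _ _ _
      (hfne (n - 1) t) (hfne n t) (hfne (n + 1) t) (heq1 n t) (heq3 n t)
  · rw [deriv_fun_div (hhd n).differentiableAt (hfd n).differentiableAt (hfne n t)]
    exact quotient_evolution_of_bilinear_neg _ _ _ _ _ _ _ _ _ _ _
      (hfne (n - 1) t) (hfne n t) (hfne (n + 1) t) (heq2 n t) (heq3 n t)
  · exact quotient_difference_of_bilinear _ _ _ _ _ _ _ _ (hfne n t) (hfne (n + 1) t) (heq4 n t)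

/-- The substitution `Q = g/f`, `R = h/f`, `u = -v/f` transforms the Hirota bilinear form of
the coupled nonisospectral semi-discrete NLS back into the nonlinear system. -/
theorem bilinearization_of_coupled_sdnNLS
    (f g h v : ℤ × ℝ → ℂ)
    (hfd : ∀ n : ℤ, Differentiable ℝ fun t => f (n, t))
    (hgd : ∀ n : ℤ, Differentiable ℝ fun t => g (n, t))
    (hhd : ∀ n : ℤ, Differentiable ℝ fun t => h (n, t))
    (hvd : ∀ n : ℤ, Differentiable ℝ fun t => v (n, t))
    (hfne : ∀ (n : ℤ) (t : ℝ), f (n, t) ≠ 0)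
    (heq1 : ∀ (n : ℤ) (t : ℝ),
      Complex.I * (deriv (fun s => g (n, s)) t * f (n, t)
          - g (n, t) * deriv (fun s => f (n, s)) t)
        = (1 / 2) * ((2 * (n : ℂ) + 2) * g (n + 1, t) * f (n - 1, t)
            + (2 * (n : ℂ) - 2) * g (n - 1, t) * f (n + 1, t)
            - 4 * (n : ℂ) * g (n, t) * f (n, t)) + g (n, t) * v (n, t))
    (heq2 : ∀ (n : ℤ) (t : ℝ),
      Complex.I * (deriv (fun s => h (n, s)) t * f (n, t)
          - h (n, t) * deriv (fun s => f (n, s)) t)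
        = -(1 / 2) * ((2 * (n : ℂ) + 2) * h (n + 1, t) * f (n - 1, t)
            + (2 * (n : ℂ) - 2) * h (n - 1, t) * f (n + 1, t)
            - 4 * (n : ℂ) * h (n, t) * f (n, t)) - h (n, t) * v (n, t))
    (heq3 : ∀ (n : ℤ) (t : ℝ),
      f (n, t) ^ 2 - f (n - 1, t) * f (n + 1, t) = g (n, t) * h (n, t))
    (heq4 : ∀ (n : ℤ) (t : ℝ),
      v (n + 1, t) * f (n, t) - v (n, t) * f (n + 1, t)
        = -g (n + 1, t) * h (n, t) - g (n, t) * h (n + 1, t))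
    (Q R u : ℤ × ℝ → ℂ)
    (hQ : ∀ (n : ℤ) (t : ℝ), Q (n, t) = g (n, t) / f (n, t))
    (hR : ∀ (n : ℤ) (t : ℝ), R (n, t) = h (n, t) / f (n, t))
    (hu : ∀ (n : ℤ) (t : ℝ), u (n, t) = -v (n, t) / f (n, t)) :
    (∀ (n : ℤ) (t : ℝ),
      Complex.I * deriv (fun s => Q (n, s)) t
        = (1 / 2) * (1 - Q (n, t) * R (n, t))
            * ((2 * (n : ℂ) + 2) * Q (n + 1, t) + (2 * (n : ℂ) - 2) * Q (n - 1, t))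
          - 2 * (n : ℂ) * Q (n, t) - Q (n, t) * u (n, t))
    ∧ (∀ (n : ℤ) (t : ℝ),
      Complex.I * deriv (fun s => R (n, s)) t
        = -(1 / 2) * (1 - Q (n, t) * R (n, t))
            * ((2 * (n : ℂ) + 2) * R (n + 1, t) + (2 * (n : ℂ) - 2) * R (n - 1, t))
          + 2 * (n : ℂ) * R (n, t) + R (n, t) * u (n, t))
    ∧ (∀ (n : ℤ) (t : ℝ),
      u (n + 1, t) - u (n, t) = Q (n + 1, t) * R (n, t) + Q (n, t) * R (n + 1, t)) :=
  bilinearization_of_coupled_sdnNLS_general f g h v hfd hgd hhd hfne heq1 heq2 heq3 heq4 Q R u hQ hR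
    hu
end

section
/- Under the Casoratian hypotheses (with N, M ≥ 1), for all n ∈ ℤ and t ∈ ℝ: f(n,t)² − f(n−1,t)f(n+1,t) = g(n,t)h(n,t). -/
open Complex Matrix

/-- The double Casoratian `C_{p, n₀-p}(n,t)` with columns
`Φ(n), Φ(n+2), …, Φ(n+2(p-1)), Ψ(n), Ψ(n+2), …`. -/
noncomputable def casDet (N M : ℕ) (Φ Ψ : ℤ → ℝ → Fin (N + M + 2) → ℂ)
    (p : ℕ) (n : ℤ) (t : ℝ) : ℂ :=
  Matrix.det (Matrix.of fun i j : Fin (N + M + 2) =>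
    if (j : ℕ) < p then Φ (n + 2 * (j : ℕ)) t i else Ψ (n + 2 * ((j : ℕ) - p)) t i)

/-- The auxiliary function
`v = |Φ(n),…,Φ(n+2N); Ψ(n),…,Ψ(n+2(M−1)), Ψ(n+2(M+1))|
   + |Φ(n),…,Φ(n+2(N−1)), Φ(n+2(N+1)); Ψ(n),…,Ψ(n+2M)| − f`. -/
noncomputable def casV (N M : ℕ) (Φ Ψ : ℤ → ℝ → Fin (N + M + 2) → ℂ)
    (n : ℤ) (t : ℝ) : ℂ :=
  Matrix.det (Matrix.of fun i j : Fin (N + M + 2) =>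
    if (j : ℕ) < N + 1 then Φ (n + 2 * (j : ℕ)) t i
    else if (j : ℕ) - (N + 1) < M then Ψ (n + 2 * ((j : ℕ) - (N + 1))) t i
    else Ψ (n + 2 * (M + 1)) t i)
  + Matrix.det (Matrix.of fun i j : Fin (N + M + 2) =>
    if (j : ℕ) < N + 1 then
      (if (j : ℕ) < N then Φ (n + 2 * (j : ℕ)) t i else Φ (n + 2 * (N + 1)) t i)
    else Ψ (n + 2 * ((j : ℕ) - (N + 1))) t i)
  - casDet N M Φ Ψ (N + 1) n t

noncomputable def rowsF (N M : ℕ) (Φ Ψ : ℤ → ℝ → Fin (N + M + 2) → ℂ)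
    (p : ℕ) (n : ℤ) (t : ℝ) : Fin (N + M + 2) → Fin (N + M + 2) → ℂ :=
  fun j => if (j : ℕ) < p then Φ (n + 2 * (j : ℕ)) t else Ψ (n + 2 * ((j : ℕ) - p)) t

lemma casDet_eq_detRows (N M : ℕ) (Φ Ψ : ℤ → ℝ → Fin (N + M + 2) → ℂ)
    (p : ℕ) (n : ℤ) (t : ℝ) :
    casDet N M Φ Ψ p n t = (Matrix.of (rowsF N M Φ Ψ p n t)).det := by
  rw [casDet, ← Matrix.det_transpose (Matrix.of (rowsF N M Φ Ψ p n t))]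
  congr 1
  ext i j
  simp only [Matrix.transpose_apply, Matrix.of_apply, rowsF]
  split_ifs <;> rfl

lemma detRows_mulVec {m : ℕ} (A : Matrix (Fin m) (Fin m) ℂ) (R : Fin m → Fin m → ℂ) :
    (Matrix.of fun j => A.mulVec (R j)).det = A.det * (Matrix.of R).det := by
  have h : (Matrix.of fun j => A.mulVec (R j)) = Matrix.of R * Aᵀ := by
    ext j i
    simp [Matrix.mul_apply, Matrix.mulVec, dotProduct, mul_comm]
  rw [h, Matrix.det_mul, Matrix.det_transpose, mul_comm]

lemma plucker {m : ℕ} (P : Fin m → Fin m → ℂ) (u v : Fin m) (huv : u ≠ v)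
    (a b c d : Fin m → ℂ) :
    (Matrix.of (Function.update (Function.update P u a) v b)).det *
      (Matrix.of (Function.update (Function.update P u c) v d)).det
    - (Matrix.of (Function.update (Function.update P u a) v c)).det *
      (Matrix.of (Function.update (Function.update P u b) v d)).det
    + (Matrix.of (Function.update (Function.update P u a) v d)).det *
      (Matrix.of (Function.update (Function.update P u b) v c)).det = 0 := by
  classical
  set L : (Fin m → ℂ) →ₗ[ℂ] ℂ :=
    (LinearMap.proj v).comp (Matrix.cramer (Matrix.of (Function.update P u a))ᵀ) with hLdef
  have hL : ∀ x : Fin m → ℂ,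
      L x = (Matrix.of (Function.update (Function.update P u a) v x)).det := by
    intro x
    simp only [hLdef, LinearMap.comp_apply, LinearMap.proj_apply, Matrix.cramer_apply]
    rw [Matrix.updateCol_transpose, Matrix.det_transpose]
    rfl
  set Q : Matrix (Fin m) (Fin m) ℂ :=
    Matrix.of (Function.update (Function.update P u b) v d) with hQdef
  have key := Matrix.mulVec_cramer Qᵀ c
  have hrows : ∀ w : Fin m → ℂ, Qᵀ *ᵥ w = ∑ j, w j • Q j := by
    intro w
    funext i
    simp [Matrix.mulVec, dotProduct, Finset.sum_apply, mul_comm]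
  have happ := congrArg L key
  rw [hrows, map_sum] at happ
  simp only [_root_.map_smul, smul_eq_mul] at happ
  have hzero : ∀ j ∈ Finset.univ, j ∉ ({u, v} : Finset (Fin m)) →
      Matrix.cramer Qᵀ c j * L (Q j) = 0 := by
    intro j _ hj
    simp only [Finset.mem_insert, Finset.mem_singleton, not_or] at hj
    have hQj : Q j = P j := by
      show Function.update (Function.update P u b) v d j = P j
      rw [Function.update_of_ne hj.2, Function.update_of_ne hj.1]
    have : L (Q j) = 0 := by
      rw [hL]
      apply Matrix.det_zero_of_row_eq hj.2
      show Function.update (Function.update P u a) v (Q j) j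
        = Function.update (Function.update P u a) v (Q j) v
      rw [Function.update_of_ne hj.2, Function.update_of_ne hj.1,
        Function.update_self, hQj]
    rw [this, mul_zero]
  have hsum : ∑ j, Matrix.cramer Qᵀ c j * L (Q j)
      = Matrix.cramer Qᵀ c u * L (Q u) + Matrix.cramer Qᵀ c v * L (Q v) := by
    rw [← Finset.sum_subset (Finset.subset_univ ({u, v} : Finset (Fin m))) hzero]
    exact Finset.sum_pair huv
  rw [hsum] at happ
  have hQu : Q u = b := by
    show Function.update (Function.update P u b) v d u = b
    rw [Function.update_of_ne huv, Function.update_self]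
  have hQv : Q v = d := by
    show Function.update (Function.update P u b) v d v = d
    rw [Function.update_self]
  have hwu : Matrix.cramer Qᵀ c u
      = (Matrix.of (Function.update (Function.update P u c) v d)).det := by
    rw [Matrix.cramer_apply, Matrix.updateCol_transpose, Matrix.det_transpose]
    show (Matrix.of (Function.update (Function.update (Function.update P u b) v d) u c)).det = _
    rw [Function.update_comm huv.symm, Function.update_idem]
  have hwv : Matrix.cramer Qᵀ c v
      = (Matrix.of (Function.update (Function.update P u b) v c)).det := by
    rw [Matrix.cramer_apply, Matrix.updateCol_transpose, Matrix.det_transpose]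
    show (Matrix.of (Function.update (Function.update (Function.update P u b) v d) v c)).det = _
    rw [Function.update_idem]
  rw [hQu, hQv, hwu, hwv, hL b, hL d] at happ
  have hdetQ : Qᵀ.det = Q.det := Matrix.det_transpose Q
  rw [hdetQ] at happ
  rw [hL c] at happ
  linear_combination happ

lemma rho1_val (N M : ℕ) (j : Fin (N + M + 2)) :
    ((Fin.cycleRange (⟨N, by omega⟩ : Fin (N + M + 2)) j : Fin (N + M + 2)) : ℕ)
      = if (j : ℕ) < N then (j : ℕ) + 1 else if (j : ℕ) = N then 0 else (j : ℕ) := by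
  rcases lt_trichotomy ((j : ℕ)) N with h | h | h
  · rw [Fin.coe_cycleRange_of_lt (by rw [Fin.lt_def]; exact h)]
    split_ifs <;> omega
  · rw [Fin.cycleRange_of_eq (by apply Fin.ext; exact h)]
    simp only [Fin.val_zero]
    split_ifs <;> omega
  · rw [Fin.cycleRange_of_gt (by rw [Fin.lt_def]; exact h)]
    split_ifs <;> omega

lemma sigma2_val (N M : ℕ) (j : Fin (N + M + 2)) :
    ((Fin.rev (Fin.cycleRange (⟨M, by omega⟩ : Fin (N + M + 2)) (Fin.rev j)) : Fin (N + M + 2)) : ℕ)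
      = if (j : ℕ) < N + 1 then (j : ℕ) else if (j : ℕ) = N + 1 then N + M + 1
        else (j : ℕ) - 1 := by
  have hrev : ((Fin.rev j : Fin (N + M + 2)) : ℕ) = N + M + 2 - ((j : ℕ) + 1) := Fin.val_rev j
  rcases lt_trichotomy ((j : ℕ)) (N + 1) with h | h | h
  · rw [Fin.cycleRange_of_gt (by rw [Fin.lt_def, hrev]; simpa using by omega), Fin.rev_rev]
    split_ifs <;> omega
  · rw [Fin.cycleRange_of_eq (by apply Fin.ext; rw [hrev]; simpa using by omega)]
    rw [Fin.val_rev]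
    simp only [Fin.val_zero]
    split_ifs <;> omega
  · rw [Fin.cycleRange_of_lt (by rw [Fin.lt_def, hrev]; simpa using by omega)]
    rw [Fin.val_rev, Fin.val_add_one_of_lt (by rw [Fin.lt_def, hrev, Fin.val_last]; omega)]
    rw [hrev]
    split_ifs <;> omega

lemma sign_cast_cycleRange {m : ℕ} (i : Fin (m + 1)) :
    (((Equiv.Perm.sign (Fin.cycleRange i)) : ℤ) : ℂ) = (-1) ^ (i : ℕ) := by
  rw [Fin.sign_cycleRange]
  push_cast
  norm_num

lemma sign_conj_rev (m : ℕ) (ρ : Equiv.Perm (Fin m)) :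
    Equiv.Perm.sign (Fin.revPerm * ρ * Fin.revPerm) = Equiv.Perm.sign ρ := by
  rw [Equiv.Perm.sign_mul, Equiv.Perm.sign_mul]
  rcases Int.units_eq_one_or (Equiv.Perm.sign (Fin.revPerm : Equiv.Perm (Fin m))) with h | h <;>
    rw [h] <;> simp

set_option maxHeartbeats 3200000 in
/-- Bilinear equation (iii) for the double Casoratians. -/
theorem casoratian_bilinear_three
    (N M : ℕ) (hN : 1 ≤ N) (hM : 1 ≤ M)
    (A : Matrix (Fin (N + M + 2)) (Fin (N + M + 2)) ℂ) (hA : IsUnit A.det)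
    (Φ Ψ : ℤ → ℝ → Fin (N + M + 2) → ℂ)
    (hΦd : ∀ (n : ℤ) (i : Fin (N + M + 2)), Differentiable ℝ fun t => Φ n t i)
    (hΨd : ∀ (n : ℤ) (i : Fin (N + M + 2)), Differentiable ℝ fun t => Ψ n t i)
    (hΦs : ∀ (n : ℤ) (t : ℝ), Φ (n + 1) t = A.mulVec (Φ n t))
    (hΨs : ∀ (n : ℤ) (t : ℝ), Ψ (n - 1) t = A.mulVec (Ψ n t))
    (hΦt : ∀ (n : ℤ) (t : ℝ) (i : Fin (N + M + 2)),
      Complex.I * deriv (fun s => Φ n s i) t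
        = ((n : ℂ) / 2) * (Φ (n + 2) t i - 2 * Φ n t i + Φ (n - 2) t i)
          - (N : ℂ) * (Φ (n + 2) t i - 2 * Φ n t i))
    (hΨt : ∀ (n : ℤ) (t : ℝ) (i : Fin (N + M + 2)),
      Complex.I * deriv (fun s => Ψ n s i) t
        = -((n : ℂ) / 2) * (Ψ (n + 2) t i - 2 * Ψ n t i + Ψ (n - 2) t i)
          + (M : ℂ) * (Ψ (n + 2) t i - 2 * Ψ n t i))
    (f g h : ℤ → ℝ → ℂ)
    (hf : ∀ (n : ℤ) (t : ℝ), f n t = casDet N M Φ Ψ (N + 1) n t)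
    (hg : ∀ (n : ℤ) (t : ℝ), g n t = casDet N M Φ Ψ (N + 2) n t)
    (hh : ∀ (n : ℤ) (t : ℝ), h n t = -casDet N M Φ Ψ N n t) :
    ∀ (n : ℤ) (t : ℝ),
      f n t ^ 2 - f (n - 1) t * f (n + 1) t = g n t * h n t := by
  intro n t
  classical
  have hαne : A.det ≠ 0 := hA.ne_zero
  set u : Fin (N + M + 2) := ⟨0, by omega⟩ with hu
  set v : Fin (N + M + 2) := ⟨N + 1, by omega⟩ with hv
  have huv : u ≠ v := by
    rw [hu, hv]
    simp [Fin.ext_iff]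
  set P : Fin (N + M + 2) → Fin (N + M + 2) → ℂ := fun j =>
    if (j : ℕ) < N + 1 then Φ (n + 2 * (j : ℕ)) t
    else Ψ (n + 2 * ((j : ℕ) - (N + 2))) t with hP
  set a : Fin (N + M + 2) → ℂ := Φ n t with ha
  set b : Fin (N + M + 2) → ℂ := Φ (n + 2 * ((N : ℕ) + 1 : ℕ)) t with hb
  set c : Fin (N + M + 2) → ℂ := Ψ (n - 2) t with hc
  set d : Fin (N + M + 2) → ℂ := Ψ (n + 2 * (M : ℕ)) t with hd
  have hΦc : ∀ {x y : ℤ}, x = y → Φ x t = Φ y t := fun hxy => by rw [hxy]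
  have hΨc : ∀ {x y : ℤ}, x = y → Ψ x t = Ψ y t := fun hxy => by rw [hxy]
  have hR : ∀ (x y : Fin (N + M + 2) → ℂ) (j : Fin (N + M + 2)),
      Function.update (Function.update P u x) v y j
        = if (j : ℕ) = N + 1 then y else if (j : ℕ) = 0 then x
          else if (j : ℕ) < N + 1 then Φ (n + 2 * (j : ℕ)) t
          else Ψ (n + 2 * ((j : ℕ) - (N + 2))) t := by
    intro x y j
    rw [Function.update_apply, Function.update_apply]
    by_cases h1 : (j : ℕ) = N + 1
    · rw [if_pos (by rw [hv]; exact Fin.ext h1), if_pos h1]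
    · rw [if_neg (by rw [hv]; exact fun hj => h1 (by rw [hj])), if_neg h1]
      by_cases h2 : (j : ℕ) = 0
      · rw [if_pos (by rw [hu]; exact Fin.ext h2), if_pos h2]
      · rw [if_neg (by rw [hu]; exact fun hj => h2 (by rw [hj])), if_neg h2]
  set ρ₁ : Equiv.Perm (Fin (N + M + 2)) :=
    Fin.cycleRange (⟨N, by omega⟩ : Fin (N + M + 2)) with hρ₁
  set σ₂ : Equiv.Perm (Fin (N + M + 2)) :=
    Fin.revPerm * Fin.cycleRange (⟨M, by omega⟩ : Fin (N + M + 2)) * Fin.revPerm with hσ₂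
  have hρ₁app : ∀ j : Fin (N + M + 2), ((ρ₁ j : Fin (N + M + 2)) : ℕ)
      = if (j : ℕ) < N then (j : ℕ) + 1 else if (j : ℕ) = N then 0 else (j : ℕ) := by
    intro j
    rw [hρ₁]
    exact rho1_val N M j
  have hσ₂app : ∀ j : Fin (N + M + 2), ((σ₂ j : Fin (N + M + 2)) : ℕ)
      = if (j : ℕ) < N + 1 then (j : ℕ) else if (j : ℕ) = N + 1 then N + M + 1
        else (j : ℕ) - 1 := by
    intro j
    rw [hσ₂]
    simp only [Equiv.Perm.mul_apply, Fin.revPerm_apply]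
    exact sigma2_val N M j
  have hsρ₁ : (((Equiv.Perm.sign ρ₁) : ℤ) : ℂ) = (-1) ^ N := by
    rw [hρ₁]
    exact sign_cast_cycleRange _
  have hsσ₂ : (((Equiv.Perm.sign σ₂) : ℤ) : ℂ) = (-1) ^ M := by
    rw [hσ₂, sign_conj_rev]
    exact sign_cast_cycleRange _
  -- claim 1 : D a b = g n t
  have hrows1 : Function.update (Function.update P u a) v b
      = rowsF N M Φ Ψ (N + 2) n t := by
    funext j
    rw [hR a b j]
    simp only [rowsF, ha, hb]
    split_ifs <;>
      first
        | rfl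
        | (exfalso; first | omega | exact ‹False›)
        | (exact hΦc (by omega))
        | (exact hΨc (by omega))
  have e1 : (Matrix.of (Function.update (Function.update P u a) v b)).det = g n t := by
    rw [hrows1, hg, casDet_eq_detRows]
  -- claim 2 : D a c = A.det * f (n-1) t
  have hrows2 : Function.update (Function.update P u a) v c
      = fun j => A *ᵥ rowsF N M Φ Ψ (N + 1) (n - 1) t j := by
    funext j
    rw [hR a c j]
    simp only [rowsF, ha, hc]
    split_ifs <;>
      first
        | (exfalso; first | omega | exact ‹False›)
        | (rw [← hΦs]; exact hΦc (by omega))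
        | (rw [← hΨs]; exact hΨc (by omega))
  have e2 : (Matrix.of (Function.update (Function.update P u a) v c)).det
      = A.det * f (n - 1) t := by
    rw [hrows2, hf, casDet_eq_detRows]
    exact detRows_mulVec A _
  -- claim 3 : D a d = (-1)^M * f n t
  have hrows3 : (Matrix.of (rowsF N M Φ Ψ (N + 1) n t)).submatrix σ₂ id
      = Matrix.of (Function.update (Function.update P u a) v d) := by
    ext j i
    simp only [Matrix.submatrix_apply, Matrix.of_apply, id_eq]
    rw [hR a d j]
    simp only [rowsF, ha, hd]
    rw [hσ₂app j]
    split_ifs <;>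
      first
        | rfl
        | (exfalso; first | omega | exact ‹False›)
        | (exact congrFun (hΦc (by omega)) i)
        | (exact congrFun (hΨc (by omega)) i)
  have e3 : (Matrix.of (Function.update (Function.update P u a) v d)).det
      = (-1) ^ M * f n t := by
    have hp := Matrix.det_permute σ₂ (Matrix.of (rowsF N M Φ Ψ (N + 1) n t))
    rw [hrows3, hsσ₂, ← casDet_eq_detRows, ← hf] at hp
    exact hp
  -- claim 4 : A.det * (A.det * f n t) = (-1)^N * D b c
  have hrows4 : (Matrix.of (Function.update (Function.update P u b) v c)).submatrix ρ₁ id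
      = Matrix.of (fun j => A *ᵥ (A *ᵥ rowsF N M Φ Ψ (N + 1) n t j)) := by
    ext j i
    simp only [Matrix.submatrix_apply, Matrix.of_apply, id_eq]
    rw [hR b c (ρ₁ j)]
    simp only [rowsF, hb, hc]
    rw [hρ₁app j]
    split_ifs <;>
      first
        | (exfalso; first | omega | exact ‹False›)
        | (rw [← hΦs, ← hΦs]; exact congrFun (hΦc (by omega)) i)
        | (rw [← hΨs, ← hΨs]; exact congrFun (hΨc (by omega)) i)
  have e4 : A.det * (A.det * f n t)
      = (-1) ^ N * (Matrix.of (Function.update (Function.update P u b) v c)).det := by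
    have hp := Matrix.det_permute ρ₁ (Matrix.of (Function.update (Function.update P u b) v c))
    rw [hrows4, hsρ₁] at hp
    have s1 : (Matrix.of (fun j => A *ᵥ (A *ᵥ rowsF N M Φ Ψ (N + 1) n t j))).det
        = A.det * (Matrix.of (fun j => A *ᵥ rowsF N M Φ Ψ (N + 1) n t j)).det :=
      detRows_mulVec A _
    have s2 : (Matrix.of (fun j => A *ᵥ rowsF N M Φ Ψ (N + 1) n t j)).det
        = A.det * (Matrix.of (rowsF N M Φ Ψ (N + 1) n t)).det :=
      detRows_mulVec A _
    rw [s1, s2, ← casDet_eq_detRows, ← hf] at hp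
    exact hp
  -- claim 5 : (-1)^N * D b d = (-1)^M * (A.det * f (n+1) t)
  have hrows5 : (Matrix.of (Function.update (Function.update P u b) v d)).submatrix ρ₁ id
      = (Matrix.of (fun j => A *ᵥ rowsF N M Φ Ψ (N + 1) (n + 1) t j)).submatrix σ₂ id := by
    ext j i
    simp only [Matrix.submatrix_apply, Matrix.of_apply, id_eq]
    rw [hR b d (ρ₁ j)]
    simp only [rowsF, hb, hd]
    rw [hρ₁app j, hσ₂app j]
    split_ifs <;>
      first
        | (exfalso; first | omega | exact ‹False›)
        | (rw [← hΦs]; exact congrFun (hΦc (by omega)) i)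
        | (rw [← hΨs]; exact congrFun (hΨc (by omega)) i)
  have e5 : (-1) ^ N * (Matrix.of (Function.update (Function.update P u b) v d)).det
      = (-1) ^ M * (A.det * f (n + 1) t) := by
    have hp1 := Matrix.det_permute ρ₁ (Matrix.of (Function.update (Function.update P u b) v d))
    have hp2 := Matrix.det_permute σ₂ (Matrix.of (fun j => A *ᵥ rowsF N M Φ Ψ (N + 1) (n + 1) t j))
    rw [hrows5, hsρ₁] at hp1
    rw [hsσ₂] at hp2
    have s2 : (Matrix.of (fun j => A *ᵥ rowsF N M Φ Ψ (N + 1) (n + 1) t j)).det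
        = A.det * (Matrix.of (rowsF N M Φ Ψ (N + 1) (n + 1) t)).det :=
      detRows_mulVec A _
    rw [s2, ← casDet_eq_detRows, ← hf] at hp2
    rw [hp2] at hp1
    exact hp1.symm
  -- claim 6 : (-1)^N * D c d = (-1)^M * (A.det * (A.det * (- h n t)))
  have hrows6 : (Matrix.of (Function.update (Function.update P u c) v d)).submatrix ρ₁ id
      = (Matrix.of (fun j => A *ᵥ (A *ᵥ rowsF N M Φ Ψ N n t j))).submatrix σ₂ id := by
    ext j i
    simp only [Matrix.submatrix_apply, Matrix.of_apply, id_eq]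
    rw [hR c d (ρ₁ j)]
    simp only [rowsF, hc, hd]
    rw [hρ₁app j, hσ₂app j]
    split_ifs <;>
      first
        | (exfalso; first | omega | exact ‹False›)
        | (rw [← hΦs, ← hΦs]; exact congrFun (hΦc (by omega)) i)
        | (rw [← hΨs, ← hΨs]; exact congrFun (hΨc (by omega)) i)
  have hcasN : casDet N M Φ Ψ N n t = - h n t := by
    rw [hh]
    ring
  have e6 : (-1) ^ N * (Matrix.of (Function.update (Function.update P u c) v d)).det
      = (-1) ^ M * (A.det * (A.det * (- h n t))) := by
    have hp1 := Matrix.det_permute ρ₁ (Matrix.of (Function.update (Function.update P u c) v d))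
    have hp2 := Matrix.det_permute σ₂ (Matrix.of (fun j => A *ᵥ (A *ᵥ rowsF N M Φ Ψ N n t j)))
    rw [hrows6, hsρ₁] at hp1
    rw [hsσ₂] at hp2
    have s1 : (Matrix.of (fun j => A *ᵥ (A *ᵥ rowsF N M Φ Ψ N n t j))).det
        = A.det * (Matrix.of (fun j => A *ᵥ rowsF N M Φ Ψ N n t j)).det :=
      detRows_mulVec A _
    have s2 : (Matrix.of (fun j => A *ᵥ rowsF N M Φ Ψ N n t j)).det
        = A.det * (Matrix.of (rowsF N M Φ Ψ N n t)).det :=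
      detRows_mulVec A _
    rw [s1, s2, ← casDet_eq_detRows, hcasN] at hp2
    rw [hp2] at hp1
    exact hp1.symm
  -- Plücker relation
  have E := plucker P u v huv a b c d
  rw [e1, e2, e3] at E
  have key : A.det * (A.det * (f n t ^ 2 - f (n - 1) t * f (n + 1) t - g n t * h n t)) = 0 := by
    rcases Nat.even_or_odd N with hN1 | hN1 <;> rcases Nat.even_or_odd M with hM1 | hM1 <;>
      simp only [hN1.neg_one_pow, hM1.neg_one_pow] at e3 e4 e5 e6 E <;>
      first
        | linear_combination E - g n t * e6 + A.det * f (n - 1) t * e5 + f n t * e4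
        | linear_combination -E + g n t * e6 - A.det * f (n - 1) t * e5 + f n t * e4
        | linear_combination -E - g n t * e6 + A.det * f (n - 1) t * e5 + f n t * e4
        | linear_combination E + g n t * e6 - A.det * f (n - 1) t * e5 + f n t * e4
  have key2 : f n t ^ 2 - f (n - 1) t * f (n + 1) t - g n t * h n t = 0 := by
    rcases mul_eq_zero.mp key with h' | h'
    · exact absurd h' hαne
    rcases mul_eq_zero.mp h' with h'' | h''
    · exact absurd h'' hαne
    exact h''
  linear_combination key2
end

section
/- Let N ≥ 0, set n := 2N+2, let T be an n×n complex matrix satisfying T·conj(T) = −I (conj denotes entrywise complex conjugation, I the identity), and let X be an n×(N+1) complex matrix. Define f := det of the n×n matrix whose first N+1 columns are those of X and whose last N+1 columns are those of T·conj(X). Then det(T)·conj(f) = f; in particular, since T is invertible, conj(f) = det(T)⁻¹·f. -/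
/-!
Write `C = (X | T X*)` and `J = [[0, -1], [1, 0]]` (blocks of size `N + 1`). Since `T T* = -1`,
`T C* = (T X* | T T* X) = (T X* | -X) = C J`, and `det J = 1`. Taking determinants gives
`det T · conj (det C) = det C`. Taking determinants of `T T* = -1` in even dimension gives
`det T · conj (det T) = 1`, so `det T` is invertible.
-/

open Matrix

namespace Matrix

section BlockRotation

variable {R : Type*} [CommRing R] {n m : Type*} [Fintype m] [DecidableEq m]

def blockRotation (m R : Type*) [Zero R] [One R] [Neg R] [DecidableEq m] :
    Matrix (m ⊕ m) (m ⊕ m) R :=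
  fromBlocks 0 (-1) 1 0

theorem fromCols_mul_blockRotation (A B : Matrix n m R) :
    fromCols A B * blockRotation m R = fromCols B (-A) := by
  simp [blockRotation, fromCols_mul_fromBlocks]

theorem det_blockRotation : (blockRotation m R).det = 1 := by
  have factor : blockRotation m R =
      fromBlocks 1 (-1) 0 1 * fromBlocks 1 0 1 1 * fromBlocks (1 : Matrix m m R) (-1) 0 1 := by
    simp only [blockRotation, fromBlocks_multiply, fromBlocks_inj]
    refine ⟨by noncomm_ring, by noncomm_ring, by noncomm_ring, by noncomm_ring⟩
  simp [factor]

end BlockRotation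

theorem of_dite_lt_eq_submatrix_finSumFinEquiv {R ι : Type*} {k l n : ℕ} (h : k + l = n)
    (A : Matrix ι (Fin k ⊕ Fin l) R) :
    (of fun i (j : Fin n) =>
      if hj : (j : ℕ) < k then A i (.inl ⟨j, hj⟩)
      else A i (.inr ⟨j - k, by have := j.isLt; omega⟩)) =
    A.submatrix id ((finCongr h.symm).trans finSumFinEquiv.symm) := by
  ext i j
  simp only [of_apply, submatrix_apply, id, Equiv.trans_apply, finCongr_apply]
  split_ifs with hj
  · have : Fin.cast h.symm j = Fin.castAdd l (⟨j, hj⟩ : Fin k) := Fin.ext rfl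
    rw [this, finSumFinEquiv_symm_apply_castAdd]
  · have : Fin.cast h.symm j = Fin.natAdd k (⟨j - k, by omega⟩ : Fin l) := by
      ext
      simp only [Fin.val_cast, Fin.natAdd_mk]
      omega
    rw [this, finSumFinEquiv_symm_apply_natAdd]

section Casoratian

variable {R : Type*} [CommRing R] [StarRing R] {n m : Type*} [Fintype n] [DecidableEq n]
  [Fintype m] [DecidableEq m] {T : Matrix n n R}

/-- The double Casoratian `|X ; T X*|`, its `m ⊕ m` columns laid out along `n` by `e`. -/
def doubleCasoratian (T : Matrix n n R) (X : Matrix n m R) (e : n ≃ m ⊕ m) : Matrix n n R :=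
  (fromCols X (T * X.map (starRingEnd R))).submatrix id e

theorem mul_map_doubleCasoratian (hT : T * T.map (starRingEnd R) = -1) (X : Matrix n m R)
    (e : n ≃ m ⊕ m) :
    T * (doubleCasoratian T X e).map (starRingEnd R) =
      doubleCasoratian T X e * (blockRotation m R).submatrix e e := by
  have hTX : T * (T * X.map (starRingEnd R)).map (starRingEnd R) = -X := by
    rw [Matrix.map_mul, ← Matrix.mul_assoc, hT, Matrix.neg_mul, Matrix.one_mul, Matrix.map_map]
    ext
    simp
  calc T * (doubleCasoratian T X e).map (starRingEnd R)
      = (T * (fromCols X (T * X.map (starRingEnd R))).map (starRingEnd R)).submatrix id e := by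
        rw [doubleCasoratian, ← submatrix_map]
        exact submatrix_mul_equiv T _ id (Equiv.refl n) e
    _ = (fromCols (T * X.map (starRingEnd R)) (-X)).submatrix id e := by
        rw [fromCols_map, mul_fromCols, hTX]
    _ = doubleCasoratian T X e * (blockRotation m R).submatrix e e := by
        rw [doubleCasoratian, submatrix_mul_equiv, fromCols_mul_blockRotation]

theorem det_mul_star_det_doubleCasoratian (hT : T * T.map (starRingEnd R) = -1)
    (X : Matrix n m R) (e : n ≃ m ⊕ m) :
    T.det * starRingEnd R (doubleCasoratian T X e).det = (doubleCasoratian T X e).det := by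
  have := congrArg det (mul_map_doubleCasoratian hT X e)
  rwa [det_mul, det_mul, det_submatrix_equiv_self, det_blockRotation, mul_one,
    ← RingHom.mapMatrix_apply, ← RingHom.map_det] at this

theorem det_mul_star_det_of_mul_map_eq_neg_one (hT : T * T.map (starRingEnd R) = -1)
    (hn : Even (Fintype.card n)) : T.det * starRingEnd R T.det = 1 := by
  have := congrArg det hT
  rwa [det_mul, det_neg, det_one, hn.neg_one_pow, mul_one, ← RingHom.mapMatrix_apply,
    ← RingHom.map_det] at this

end Casoratian

end Matrix

/-- The double Casoratian `f = |X ; T·conj(X)|` built from an `(2N+2) × (N+1)` column block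
`X` and its conjugate-reduction partner `T·conj(X)`, where `T·conj(T) = -I`, satisfies
`det(T)·conj(f) = f`, and hence `conj(f) = det(T)⁻¹·f`. -/
theorem casoratian_conj_f (N : ℕ)
    (T : Matrix (Fin (2 * N + 2)) (Fin (2 * N + 2)) ℂ)
    (hT : T * T.map (starRingEnd ℂ) = -1)
    (X : Matrix (Fin (2 * N + 2)) (Fin (N + 1)) ℂ)
    (f : ℂ)
    (hf : f = Matrix.det (Matrix.of fun i j : Fin (2 * N + 2) =>
      if h : (j : ℕ) < N + 1 then X i ⟨(j : ℕ), h⟩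
      else (T * X.map (starRingEnd ℂ)) i
        ⟨(j : ℕ) - (N + 1), by have := j.isLt; omega⟩)) :
    T.det * starRingEnd ℂ f = f ∧ starRingEnd ℂ f = T.det⁻¹ * f := by
  have hn : N + 1 + (N + 1) = 2 * N + 2 := by omega
  set e := (finCongr hn.symm).trans finSumFinEquiv.symm
  have hf' : f = (doubleCasoratian T X e).det := by
    rw [hf]
    exact congrArg det <|
      of_dite_lt_eq_submatrix_finSumFinEquiv hn (fromCols X (T * X.map (starRingEnd ℂ)))
  have hfixed : T.det * starRingEnd ℂ f = f := by
    rw [hf']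
    exact det_mul_star_det_doubleCasoratian hT X e
  have hdetT : T.det ≠ 0 := left_ne_zero_of_mul_eq_one <|
    det_mul_star_det_of_mul_map_eq_neg_one hT ⟨N + 1, by rw [Fintype.card_fin, hn]⟩
  exact ⟨hfixed, (eq_inv_mul_iff_mul_eq₀ hdetT).mpr hfixed⟩
end

section
/- Let N ≥ 1, set n := 2N+2, let T be an n×n complex matrix satisfying T·conj(T) = −I (conj denotes entrywise complex conjugation), let X₂ be an n×(N+2) complex matrix and X₀ an n×N complex matrix. Define g := det of the n×n matrix whose first N+2 columns are those of X₂ and whose last N columns are those of T·conj(X₀), and define h := −det of the n×n matrix whose first N columns are those of X₀ and whose last N+2 columns are those of T·conj(X₂). Then det(T)·conj(g) = −h; in particular conj(g) = −det(T)⁻¹·h. -/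
/-!
Since `T * conj T = -1`, multiplying `conj |X₂ ; T conj X₀|` by `T` gives `|T conj X₂ ; -X₀|`.
Undoing the `N` sign changes and moving the `N` columns of `X₀` in front of the `N + 2` others
costs `(-1) ^ N * (-1) ^ (N * (N + 2)) = 1`, so `det T * conj g = |X₀ ; T conj X₂| = -h`.
-/

open Matrix

theorem val_finRotate_pow_apply {n : ℕ} (k : ℕ) (j : Fin n) :
    ((finRotate n ^ k) j : ℕ) = (j + k) % n := by
  obtain _ | n := n
  · exact j.elim0
  induction k with
  | zero => simp [Nat.mod_eq_of_lt j.isLt]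
  | succ k ih =>
    rw [pow_succ', Equiv.Perm.mul_apply, finRotate_apply, Fin.val_add, ih]
    simp [Nat.add_mod, ← add_assoc]

theorem sign_finRotate_add_pow_left (p q : ℕ) :
    Equiv.Perm.sign (finRotate (p + q) ^ p) = (-1) ^ (p * q) := by
  obtain _ | p := p
  · simp
  rw [map_pow, sign_finRotate, ← pow_mul, Nat.add_right_comm, Nat.add_sub_cancel,
    show (p + q) * (p + 1) = p * (p + 1) + (p + 1) * q by ring, pow_add,
    (Nat.even_mul_succ_self p).neg_one_pow, one_mul]

namespace Matrix

variable {m R : Type*} {n p q : ℕ}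

/-- The double Casoratian `|A ; B|`. -/
def appendCols (h : p + q = n) (A : Matrix m (Fin p) R) (B : Matrix m (Fin q) R) :
    Matrix m (Fin n) R :=
  of fun i j => if hj : (j : ℕ) < p then A i ⟨j, hj⟩ else B i ⟨j - p, by omega⟩

theorem map_appendCols {S : Type*} (h : p + q = n) (A : Matrix m (Fin p) R)
    (B : Matrix m (Fin q) R) (f : R → S) :
    (appendCols h A B).map f = appendCols h (A.map f) (B.map f) := by
  ext i j
  by_cases hj : (j : ℕ) < p <;> simp [appendCols, hj]

theorem mul_appendCols {l : Type*} [Fintype m] [NonUnitalNonAssocSemiring R] (h : p + q = n)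
    (M : Matrix l m R) (A : Matrix m (Fin p) R) (B : Matrix m (Fin q) R) :
    M * appendCols h A B = appendCols h (M * A) (M * B) := by
  ext i j
  by_cases hj : (j : ℕ) < p <;> simp [appendCols, mul_apply, hj]

section Det

variable [CommRing R]

theorem det_appendCols_neg_right (h : p + q = n) (A : Matrix (Fin n) (Fin p) R)
    (B : Matrix (Fin n) (Fin q) R) :
    det (appendCols h A (-B)) = (-1) ^ q * det (appendCols h A B) := by
  have hsign : appendCols h A (-B) =
      of fun i (j : Fin n) => (if (j : ℕ) < p then 1 else -1) * appendCols h A B i j := by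
    ext i j
    by_cases hj : (j : ℕ) < p <;> simp [appendCols, hj]
  subst h
  rw [hsign, det_mul_row, Fin.prod_univ_add]
  simp

theorem det_appendCols_comm (h : p + q = n) (h' : q + p = n) (A : Matrix (Fin n) (Fin p) R)
    (B : Matrix (Fin n) (Fin q) R) :
    det (appendCols h A B) = (-1) ^ (p * q) * det (appendCols h' B A) := by
  subst h
  have hrot : appendCols h' B A = (appendCols rfl A B).submatrix id (finRotate (p + q) ^ p) := by
    ext i j
    have hj := j.isLt
    by_cases hjq : (j : ℕ) < q
    · have : (j + p) % (p + q) = j + p := Nat.mod_eq_of_lt (by omega)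
      simp [appendCols, val_finRotate_pow_apply, hjq, this]
    · have : (j + p) % (p + q) = j - q := by
        rw [show (j : ℕ) + p = (j - q) + (p + q) by omega, Nat.add_mod_right,
          Nat.mod_eq_of_lt (by omega)]
      simp [appendCols, val_finRotate_pow_apply, hjq, this, show (j : ℕ) - q < p by omega]
  rw [hrot, det_permute', sign_finRotate_add_pow_left, ← mul_assoc]
  push_cast
  rw [← pow_add, ← two_mul, pow_mul, neg_one_sq, one_pow, one_mul]

theorem det_mul_star_det_appendCols [StarRing R] {T : Matrix (Fin n) (Fin n) R}
    (hT : T * T.map (starRingEnd R) = -1) (h : p + q = n) (h' : q + p = n) (hn : Even n)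
    (A : Matrix (Fin n) (Fin p) R) (B : Matrix (Fin n) (Fin q) R) :
    det T * starRingEnd R (det (appendCols h A (T * B.map (starRingEnd R)))) =
      det (appendCols h' B (T * A.map (starRingEnd R))) := by
  have hsign : Even (q * (p + 1)) := by
    rw [← h, Nat.even_add] at hn
    rw [Nat.even_mul, Nat.even_add_one]
    tauto
  calc det T * starRingEnd R (det (appendCols h A (T * B.map (starRingEnd R))))
      = det (appendCols h (T * A.map (starRingEnd R)) (-B)) := by
        rw [RingHom.map_det, RingHom.mapMatrix_apply, ← det_mul, map_appendCols,
          mul_appendCols, Matrix.map_mul, ← Matrix.mul_assoc, hT, Matrix.map_map]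
        simp [Function.comp_def]
    _ = (-1) ^ (q * (p + 1)) * det (appendCols h' B (T * A.map (starRingEnd R))) := by
        rw [det_appendCols_neg_right, det_appendCols_comm h h', ← mul_assoc, ← pow_add]
        ring_nf
    _ = _ := by rw [hsign.neg_one_pow, one_mul]

end Det

end Matrix

/-- The double Casoratians `g = |X₂ ; T·conj(X₀)|` and `h = −|X₀ ; T·conj(X₂)|`, built from
an `(2N+2) × (N+2)` block `X₂` and an `(2N+2) × N` block `X₀` with `T·conj(T) = -I`, satisfy
`det(T)·conj(g) = −h`, and hence `conj(g) = −det(T)⁻¹·h`. -/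
theorem casoratian_conj_g_h (N : ℕ)
    (T : Matrix (Fin (2 * N + 2)) (Fin (2 * N + 2)) ℂ)
    (hT : T * T.map (starRingEnd ℂ) = -1)
    (X₂ : Matrix (Fin (2 * N + 2)) (Fin (N + 2)) ℂ)
    (X₀ : Matrix (Fin (2 * N + 2)) (Fin N) ℂ)
    (g h : ℂ)
    (hg : g = Matrix.det (Matrix.of fun i j : Fin (2 * N + 2) =>
      if hj : (j : ℕ) < N + 2 then X₂ i ⟨(j : ℕ), hj⟩
      else (T * X₀.map (starRingEnd ℂ)) i
        ⟨(j : ℕ) - (N + 2), by have := j.isLt; omega⟩))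
    (hh : h = -Matrix.det (Matrix.of fun i j : Fin (2 * N + 2) =>
      if hj : (j : ℕ) < N then X₀ i ⟨(j : ℕ), hj⟩
      else (T * X₂.map (starRingEnd ℂ)) i
        ⟨(j : ℕ) - N, by have := j.isLt; omega⟩)) :
    T.det * starRingEnd ℂ g = -h ∧ starRingEnd ℂ g = -T.det⁻¹ * h := by
  have hdet : T.det * starRingEnd ℂ g = -h := by
    rw [hg, hh, neg_neg]
    exact det_mul_star_det_appendCols hT (by omega) (by omega) ⟨N + 1, by ring⟩ X₂ X₀
  have hTinv : T * -T.map (starRingEnd ℂ) = 1 := by rw [Matrix.mul_neg, hT, neg_neg]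
  have hT0 : T.det ≠ 0 := (isUnit_det_of_right_inverse hTinv).ne_zero
  refine ⟨hdet, ?_⟩
  rw [neg_mul, ← mul_neg, ← hdet, inv_mul_cancel_left₀ hT0]
end

section
/- Let β, c ∈ ℂ, N ∈ ℕ, and define k(t) := Log(1 − i/(t+β)) and w(t) := −it + Log(t+β) using the principal complex logarithm. Define φ : ℤ × ℝ → ℂ by φ(n,t) := exp((n/2)·k(t) + N·w(t) + c). Then for every n ∈ ℤ and every t ∈ ℝ such that t+β lies off the closed negative real axis and (t+β−i)/(t+β) lies off the closed negative real axis (so that both logarithms are differentiable at t), one has i·∂ₜφ(n,t) = (n/2)(φ(n+2,t) − 2φ(n,t) + φ(n−2,t)) − N(φ(n+2,t) − 2φ(n,t)). -/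
open Complex

/-!
Write `z = t + β` and `q = e^{k(t)} = (z - i)/z`. Since `φ(n,t)` is the exponential of a
function affine in `n`, the shifts are `φ(n ± 2, t) = q^{±1} φ(n, t)` and
`∂ₜφ(n, t) = ((n/2) k'(t) + N w'(t)) φ(n, t)`, so the condition reduces to a rational identity
in `z`: `k'(t) = i/(z(z - i))` while `q - 2 + q⁻¹ = (q - 1)²/q = -1/(z(z - i))`, and
`i w'(t) = 1 + i/z = -(q - 2)`.
-/

section ExponentialLattice

variable (k w : ℝ → ℂ) (b c : ℂ)

theorem exp_half_mul_add_of_add_two (n : ℤ) (t : ℝ) :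
    exp (((n + 2 : ℤ) : ℂ) / 2 * k t + b * w t + c)
      = exp (k t) * exp ((n : ℂ) / 2 * k t + b * w t + c) := by
  rw [← exp_add]
  push_cast
  ring_nf

theorem exp_half_mul_add_of_sub_two (n : ℤ) (t : ℝ) :
    exp (((n - 2 : ℤ) : ℂ) / 2 * k t + b * w t + c)
      = (exp (k t))⁻¹ * exp ((n : ℂ) / 2 * k t + b * w t + c) := by
  rw [← exp_neg, ← exp_add]
  push_cast
  ring_nf

theorem hasDerivAt_exp_half_mul_add {k' w' : ℂ} {t : ℝ} (hk : HasDerivAt k k' t)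
    (hw : HasDerivAt w w' t) (n : ℤ) :
    HasDerivAt (fun s : ℝ => exp ((n : ℂ) / 2 * k s + b * w s + c))
      (exp ((n : ℂ) / 2 * k t + b * w t + c) * ((n : ℂ) / 2 * k' + b * w')) t := by
  simpa using (((hk.const_mul ((n : ℂ) / 2)).add (hw.const_mul b)).add_const c).cexp

end ExponentialLattice

section Logarithms

theorem left_ne_zero_of_div_mem_slitPlane {a z : ℂ} (h : a / z ∈ slitPlane) : a ≠ 0 :=
  fun ha => slitPlane_ne_zero h (by rw [ha, zero_div])

theorem right_ne_zero_of_div_mem_slitPlane {a z : ℂ} (h : a / z ∈ slitPlane) : z ≠ 0 :=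
  fun hz => slitPlane_ne_zero h (by rw [hz, div_zero])

theorem exp_log_one_sub_I_div {z : ℂ} (h : (z - I) / z ∈ slitPlane) :
    exp (log (1 - I / z)) = (z - I) / z := by
  rw [one_sub_div (right_ne_zero_of_div_mem_slitPlane h), exp_log (slitPlane_ne_zero h)]

variable (β : ℂ) (t : ℝ)

theorem hasDerivAt_ofReal_add_const : HasDerivAt (fun s : ℝ => (s : ℂ) + β) 1 t :=
  (hasDerivAt_id t).ofReal_comp.add_const β

theorem hasDerivAt_log_one_sub_I_div
    (h : ((t : ℂ) + β - I) / ((t : ℂ) + β) ∈ slitPlane) :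
    HasDerivAt (fun s : ℝ => log (1 - I / ((s : ℂ) + β)))
      (I / (((t : ℂ) + β) * ((t : ℂ) + β - I))) t := by
  have hz := right_ne_zero_of_div_mem_slitPlane h
  have hinner : HasDerivAt (fun s : ℝ => 1 - I / ((s : ℂ) + β)) (I / ((t : ℂ) + β) ^ 2) t := by
    refine (((hasDerivAt_const t I).fun_div (hasDerivAt_ofReal_add_const β t) hz).const_sub
      1).congr_deriv ?_
    ring
  convert hinner.clog_real (one_sub_div hz ▸ h) using 1
  rw [one_sub_div hz]
  field_simp

theorem hasDerivAt_neg_I_mul_add_log (h : (t : ℂ) + β ∈ slitPlane) :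
    HasDerivAt (fun s : ℝ => -I * (s : ℂ) + log ((s : ℂ) + β))
      (-I + 1 / ((t : ℂ) + β)) t := by
  have hlin : HasDerivAt (fun s : ℝ => -I * (s : ℂ)) (-I) t := by
    simpa using (hasDerivAt_id t).ofReal_comp.const_mul (-I)
  exact hlin.add ((hasDerivAt_ofReal_add_const β t).clog_real h)

end Logarithms

theorem I_mul_logDeriv_eq_second_difference {z : ℂ} (hz : z ≠ 0) (hzI : z - I ≠ 0) (a b : ℂ) :
    I * (a * (I / (z * (z - I))) + b * (-I + 1 / z))
      = a * ((z - I) / z - 2 + ((z - I) / z)⁻¹) - b * ((z - I) / z - 2) := by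
  rw [inv_div]
  field_simp
  linear_combination b * (I * z - z ^ 2) * I_sq

/-- The exponential entry `φ(n,t) = exp((n/2)·k(t) + N·w(t) + c)` with
`k(t) = Log(1 − i/(t+β))` and `w(t) = −it + Log(t+β)` satisfies the `Φ`-part of the
Casoratian condition equations of the nonisospectral semi-discrete NLS, at every time `t`
where both principal logarithms are differentiable. -/
theorem phi_entry_satisfies_condition (β c : ℂ) (N : ℕ)
    (k w : ℝ → ℂ)
    (hk : ∀ t : ℝ, k t = Complex.log (1 - Complex.I / ((t : ℂ) + β)))
    (hw : ∀ t : ℝ, w t = -Complex.I * (t : ℂ) + Complex.log ((t : ℂ) + β))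
    (φ : ℤ → ℝ → ℂ)
    (hφ : ∀ (n : ℤ) (t : ℝ),
      φ n t = Complex.exp (((n : ℂ) / 2) * k t + (N : ℂ) * w t + c)) :
    ∀ (n : ℤ) (t : ℝ),
      ((t : ℂ) + β) ∈ Complex.slitPlane →
      (((t : ℂ) + β - Complex.I) / ((t : ℂ) + β)) ∈ Complex.slitPlane →
      Complex.I * deriv (fun s : ℝ => φ n s) t
        = ((n : ℂ) / 2) * (φ (n + 2) t - 2 * φ n t + φ (n - 2) t)
          - (N : ℂ) * (φ (n + 2) t - 2 * φ n t) := by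
  intro n t hz hq
  have hk' := hasDerivAt_log_one_sub_I_div β t hq
  rw [← funext hk] at hk'
  have hw' := hasDerivAt_neg_I_mul_add_log β t hz
  rw [← funext hw] at hw'
  have hexp_k : exp (k t) = ((t : ℂ) + β - I) / ((t : ℂ) + β) := hk t ▸ exp_log_one_sub_I_div hq
  simp only [hφ, exp_half_mul_add_of_add_two, exp_half_mul_add_of_sub_two,
    ((hasDerivAt_exp_half_mul_add k w _ c hk' hw' n).deriv), hexp_k]
  linear_combination exp ((n : ℂ) / 2 * k t + (N : ℂ) * w t + c) *
    I_mul_logDeriv_eq_second_difference (slitPlane_ne_zero hz)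
      (left_ne_zero_of_div_mem_slitPlane hq) ((n : ℂ) / 2) (N : ℂ)
end

section
/- Let β, c ∈ ℂ, N ∈ ℕ, and define k(t) := Log(1 − i/(t+β)) and w(t) := −it + Log(t+β) using the principal complex logarithm. Define ψ : ℤ × ℝ → ℂ by ψ(n,t) := exp(−(n/2)·k(t) − N·w(t) − c). Then for every n ∈ ℤ and every t ∈ ℝ such that t+β lies off the closed negative real axis and (t+β−i)/(t+β) lies off the closed negative real axis (so that both logarithms are differentiable at t), one has i·∂ₜψ(n,t) = −(n/2)(ψ(n+2,t) − 2ψ(n,t) + ψ(n−2,t)) + N(ψ(n−2,t) − 2ψ(n,t)). -/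
open Complex

/-!
With `q = exp k = 1 - i/(t+β)` the double shifts act by `ψ(n ± 2) = q^{∓1} ψ(n)`, so after
dividing by `ψ(n)` the equation splits into the two scalar identities
`i k' = q⁻¹ - 2 + q` and `-i w' = q - 2`. The second is immediate from `w' = -i + 1/(t+β)`;
for the first, `q' = i/(t+β)²` gives `i k' = i q'/q = -1/((t+β)² q) = (1 - q)²/q`.
-/

section ExpEntry

variable (k w : ℝ → ℂ) (N c : ℂ)

noncomputable def expEntry (n : ℤ) (t : ℝ) : ℂ :=
  cexp (-((n : ℂ) / 2) * k t - N * w t - c)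

variable {k w N c}

theorem expEntry_add_two (n : ℤ) (t : ℝ) :
    expEntry k w N c (n + 2) t = expEntry k w N c n t * cexp (-k t) := by
  rw [expEntry, expEntry, ← Complex.exp_add]
  push_cast
  ring_nf

theorem expEntry_sub_two (n : ℤ) (t : ℝ) :
    expEntry k w N c (n - 2) t = expEntry k w N c n t * cexp (k t) := by
  rw [expEntry, expEntry, ← Complex.exp_add]
  push_cast
  ring_nf

theorem hasDerivAt_expEntry {k' w' : ℂ} {t : ℝ} (hk : HasDerivAt k k' t)
    (hw : HasDerivAt w w' t) (n : ℤ) :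
    HasDerivAt (expEntry k w N c n)
      (expEntry k w N c n t * (-((n : ℂ) / 2) * k' - N * w')) t :=
  (((hk.const_mul _).sub (hw.const_mul N)).sub_const c).cexp

theorem I_mul_deriv_expEntry {k' w' : ℂ} {t : ℝ} (hk : HasDerivAt k k' t)
    (hw : HasDerivAt w w' t) (hk' : I * k' = cexp (-k t) - 2 + cexp (k t))
    (hw' : -I * w' = cexp (k t) - 2) (n : ℤ) :
    I * deriv (expEntry k w N c n) t
      = -((n : ℂ) / 2) * (expEntry k w N c (n + 2) t - 2 * expEntry k w N c n t
          + expEntry k w N c (n - 2) t)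
        + N * (expEntry k w N c (n - 2) t - 2 * expEntry k w N c n t) := by
  rw [(hasDerivAt_expEntry hk hw n).deriv, expEntry_add_two, expEntry_sub_two]
  linear_combination (-((n : ℂ) / 2) * expEntry k w N c n t) * hk'
    + N * expEntry k w N c n t * hw'

end ExpEntry

theorem hasDerivAt_log_one_sub_div_add_const (a β : ℂ) {t : ℝ} (hz : (t : ℂ) + β ≠ 0)
    (hq : 1 - a / ((t : ℂ) + β) ∈ slitPlane) :
    HasDerivAt (fun s : ℝ => log (1 - a / ((s : ℂ) + β)))
      (a / (((t : ℂ) + β) ^ 2 * (1 - a / ((t : ℂ) + β)))) t := by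
  have hquot :
      HasDerivAt (fun z : ℂ => 1 - a / (z + β)) (a / ((t : ℂ) + β) ^ 2) (t : ℂ) := by
    simp only [div_eq_mul_inv]
    refine (((((hasDerivAt_id (t : ℂ)).add_const β).inv hz).const_mul a).const_sub 1).congr_deriv
      ?_
    simp only [id]
    ring
  refine ((hasDerivAt_log hq).comp (t : ℂ) hquot).comp_ofReal.congr_deriv ?_
  field_simp

theorem hasDerivAt_const_mul_add_log_add_const (a β : ℂ) {t : ℝ}
    (hz : (t : ℂ) + β ∈ slitPlane) :
    HasDerivAt (fun s : ℝ => a * s + log ((s : ℂ) + β)) (a + 1 / ((t : ℂ) + β)) t := by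
  have hlin : HasDerivAt (fun s : ℝ => a * (s : ℂ)) a t := by
    simpa using ((hasDerivAt_id (t : ℂ)).const_mul a).comp_ofReal
  refine (hlin.add ((hasDerivAt_log hz).comp (t : ℂ)
    ((hasDerivAt_id _).add_const β)).comp_ofReal).congr_deriv ?_
  simp only [one_div, mul_one]

theorem I_mul_I_div_sq_mul_one_sub_I_div {z : ℂ} (hz : z ≠ 0) (hq : 1 - I / z ≠ 0) :
    I * (I / (z ^ 2 * (1 - I / z))) = (1 - I / z)⁻¹ - 2 + (1 - I / z) := by
  rw [one_sub_div hz] at hq ⊢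
  have hzI : z - I ≠ 0 := left_ne_zero_of_mul (by rwa [div_eq_mul_inv] at hq)
  field_simp
  ring

/-- The exponential entry `ψ(n,t) = exp(−(n/2)·k(t) − N·w(t) − c)` with
`k(t) = Log(1 − i/(t+β))` and `w(t) = −it + Log(t+β)` satisfies the `Ψ`-part of the
Casoratian condition equations of the nonisospectral semi-discrete NLS, at every time `t`
where both principal logarithms are differentiable. -/
theorem psi_entry_satisfies_condition (β c : ℂ) (N : ℕ)
    (k w : ℝ → ℂ)
    (hk : ∀ t : ℝ, k t = Complex.log (1 - Complex.I / ((t : ℂ) + β)))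
    (hw : ∀ t : ℝ, w t = -Complex.I * (t : ℂ) + Complex.log ((t : ℂ) + β))
    (ψ : ℤ → ℝ → ℂ)
    (hψ : ∀ (n : ℤ) (t : ℝ),
      ψ n t = Complex.exp (-((n : ℂ) / 2) * k t - (N : ℂ) * w t - c)) :
    ∀ (n : ℤ) (t : ℝ),
      ((t : ℂ) + β) ∈ Complex.slitPlane →
      (((t : ℂ) + β - Complex.I) / ((t : ℂ) + β)) ∈ Complex.slitPlane →
      Complex.I * deriv (fun s : ℝ => ψ n s) t
        = -((n : ℂ) / 2) * (ψ (n + 2) t - 2 * ψ n t + ψ (n - 2) t)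
          + (N : ℂ) * (ψ (n - 2) t - 2 * ψ n t) := by
  intro n t hz hq
  obtain rfl : ψ = expEntry k w N c := funext₂ hψ
  obtain rfl : k = fun s : ℝ => log (1 - I / ((s : ℂ) + β)) := funext hk
  obtain rfl : w = fun s : ℝ => -I * s + log ((s : ℂ) + β) := funext hw
  have hz0 : (t : ℂ) + β ≠ 0 := slitPlane_ne_zero hz
  rw [sub_div, div_self hz0] at hq
  have hexp_k : cexp (log (1 - I / ((t : ℂ) + β))) = 1 - I / ((t : ℂ) + β) :=
    exp_log (slitPlane_ne_zero hq)
  refine I_mul_deriv_expEntry (hasDerivAt_log_one_sub_div_add_const I β hz0 hq)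
    (hasDerivAt_const_mul_add_log_add_const (-I) β hz) ?_ ?_ n
  · rw [Complex.exp_neg, hexp_k]
    exact I_mul_I_div_sq_mul_one_sub_I_div hz0 (slitPlane_ne_zero hq)
  · rw [hexp_k]
    linear_combination I_sq
end

section
/- Let a₀, b₀, c₀ ∈ ℝ with b₀ ≠ 0 and b₀ ≠ 1. Define Λ(t) := (1−2b₀)²/(4((t+a₀)² + b₀²)((t+a₀)² + (b₀−1)²)), H(t) := ln[((t+a₀)² + (b₀−1)²)/((t+a₀)² + b₀²)], and F(n,t) := Λ(t)·sech²((n/2)H(t) + 2c₀). Then 0 ≤ F(n,t) ≤ Λ(t) for all n, t ∈ ℝ, and Λ(t) → 0 as t → +∞ and as t → −∞; consequently F(n,t) → 0 as t → ±∞, uniformly in n. -/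
/-! The amplitude `Λ` is a constant over a degree-four polynomial in `t` that is bounded below
by a positive multiple of `(t + a₀)⁴`, so it vanishes at `±∞`; and since `cosh ≥ 1`, the factor
`sech²` lies in `[0, 1]` whatever the value of the phase `(n / 2) H(t) + 2 c₀`. Hence
`0 ≤ F(n, t) ≤ Λ(t)`, and the decay of `Λ` is uniform in `n`. -/

open Filter Real Topology

lemma sech_sq_le_one (x : ℝ) : (1 / cosh x) ^ 2 ≤ 1 :=
  pow_le_one₀ (by positivity) ((div_le_one (cosh_pos x)).2 (one_le_cosh x))

lemma mul_sech_sq_mem_Icc {A : ℝ} (hA : 0 ≤ A) (x : ℝ) : A * (1 / cosh x) ^ 2 ∈ Set.Icc 0 A :=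
  ⟨by positivity, mul_le_of_le_one_right hA (sech_sq_le_one x)⟩

lemma tendsto_sq_add_const_cocompact_atTop (a : ℝ) :
    Tendsto (fun t : ℝ => (t + a) ^ 2) (cocompact ℝ) atTop := by
  have h : Tendsto (fun t : ℝ => ‖t + a‖) (cocompact ℝ) atTop :=
    tendsto_norm_cocompact_atTop.comp (Homeomorph.addRight a).isClosedEmbedding.tendsto_cocompact
  simpa only [Function.comp_def, norm_eq_abs, sq_abs] using (tendsto_pow_atTop two_ne_zero).comp h

lemma tendsto_div_mul_sq_add_cocompact (a c p q : ℝ) :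
    Tendsto (fun t : ℝ => c / (4 * ((t + a) ^ 2 + p) * ((t + a) ^ 2 + q))) (cocompact ℝ) (𝓝 0) := by
  have hs := tendsto_sq_add_const_cocompact_atTop a
  refine tendsto_const_nhds.div_atTop ?_
  exact ((tendsto_atTop_add_const_right _ p hs).const_mul_atTop four_pos).atTop_mul_atTop₀
    (tendsto_atTop_add_const_right _ q hs)

lemma tendstoUniformly_zero_of_norm_le {ι α E : Type*} [SeminormedAddCommGroup E] {l : Filter ι}
    {F : ι → α → E} {g : ι → ℝ} (hF : ∀ i x, ‖F i x‖ ≤ g i) (hg : Tendsto g l (𝓝 0)) :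
    TendstoUniformly F (fun _ => 0) l := by
  rw [Metric.tendstoUniformly_iff]
  intro ε hε
  filter_upwards [hg.eventually (gt_mem_nhds hε)] with i hi x
  simpa only [dist_zero_left] using (hF i x).trans_lt hi

theorem one_soliton_temporal_decay_general (a₀ b₀ c₀ : ℝ)
    (H Λ : ℝ → ℝ) (F : ℝ → ℝ → ℝ)
    (hΛ : ∀ t : ℝ, Λ t = (1 - 2 * b₀) ^ 2
      / (4 * ((t + a₀) ^ 2 + b₀ ^ 2) * ((t + a₀) ^ 2 + (b₀ - 1) ^ 2)))
    (hF : ∀ n t : ℝ, F n t = Λ t * (1 / Real.cosh ((n / 2) * H t + 2 * c₀)) ^ 2) :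
    (∀ n t : ℝ, 0 ≤ F n t ∧ F n t ≤ Λ t)
    ∧ Tendsto Λ atTop (nhds 0) ∧ Tendsto Λ atBot (nhds 0)
    ∧ TendstoUniformly (fun t (n : ℝ) => F n t) (fun _ => 0) atTop
    ∧ TendstoUniformly (fun t (n : ℝ) => F n t) (fun _ => 0) atBot := by
  have hΛ_nonneg (t : ℝ) : 0 ≤ Λ t := hΛ t ▸ by positivity
  have hbound (n t : ℝ) : F n t ∈ Set.Icc 0 (Λ t) := hF n t ▸ mul_sech_sq_mem_Icc (hΛ_nonneg t) _
  have hnorm (t n : ℝ) : ‖F n t‖ ≤ Λ t := by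
    rw [norm_of_nonneg (hbound n t).1]
    exact (hbound n t).2
  have hdecay : Tendsto Λ (cocompact ℝ) (𝓝 0) := by
    rw [funext hΛ]
    exact tendsto_div_mul_sq_add_cocompact a₀ _ _ _
  have hTop := hdecay.mono_left atTop_le_cocompact
  have hBot := hdecay.mono_left atBot_le_cocompact
  exact ⟨hbound, hTop, hBot, tendstoUniformly_zero_of_norm_le hnorm hTop,
    tendstoUniformly_zero_of_norm_le hnorm hBot⟩

/-- Temporal localization of the 1-soliton: `0 ≤ F(n,t) ≤ Λ(t)`, the time-varying amplitude
`Λ(t)` decays to `0` as `t → ±∞`, and consequently `F(n,t) → 0` as `t → ±∞`, uniformly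
in `n`. -/
theorem one_soliton_temporal_decay (a₀ b₀ c₀ : ℝ) (hb0 : b₀ ≠ 0) (hb1 : b₀ ≠ 1)
    (H Λ : ℝ → ℝ) (F : ℝ → ℝ → ℝ)
    (hH : ∀ t : ℝ, H t = Real.log
      (((t + a₀) ^ 2 + (b₀ - 1) ^ 2) / ((t + a₀) ^ 2 + b₀ ^ 2)))
    (hΛ : ∀ t : ℝ, Λ t = (1 - 2 * b₀) ^ 2
      / (4 * ((t + a₀) ^ 2 + b₀ ^ 2) * ((t + a₀) ^ 2 + (b₀ - 1) ^ 2)))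
    (hF : ∀ n t : ℝ, F n t = Λ t * (1 / Real.cosh ((n / 2) * H t + 2 * c₀)) ^ 2) :
    (∀ n t : ℝ, 0 ≤ F n t ∧ F n t ≤ Λ t)
    ∧ Tendsto Λ atTop (nhds 0) ∧ Tendsto Λ atBot (nhds 0)
    ∧ TendstoUniformly (fun t (n : ℝ) => F n t) (fun _ => 0) atTop
    ∧ TendstoUniformly (fun t (n : ℝ) => F n t) (fun _ => 0) atBot :=
  one_soliton_temporal_decay_general a₀ b₀ c₀ H Λ F hΛ hF
end

section
/- Let a₀, b₀, c₀ ∈ ℝ with b₀ ∉ {0, 1/2, 1}, and define H(t) := ln[((t+a₀)² + (b₀−1)²)/((t+a₀)² + b₀²)], Λ(t) := (1−2b₀)²/(4((t+a₀)² + b₀²)((t+a₀)² + (b₀−1)²)), and F(n,t) := Λ(t)·sech²((n/2)H(t) + 2c₀). Then for every fixed t ∈ ℝ one has H(t) ≠ 0, and F(n,t) → 0 as n → +∞ and as n → −∞. -/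
/-!
The two quadratics under the logarithm in `H(t)` differ by the constant `1 - 2b₀`, so `H(t) ≠ 0`.
Hence `n ↦ (n/2) H(t) + 2c₀` is a nonconstant affine map, which is proper, and `sech²` vanishes
at infinity since `cosh x ≥ e^{|x|}/2`.
-/

open Filter Topology Real

theorem tendsto_affine_cocompact {K : Type*} [DivisionRing K] [TopologicalSpace K]
    [IsTopologicalRing K] {a : K} (ha : a ≠ 0) (b : K) :
    Tendsto (fun x => a * x + b) (cocompact K) (cocompact K) :=
  Tendsto.comp (Homeomorph.addRight b).map_cocompact.le (tendsto_cocompact_mul_left₀ ha)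

theorem Real.tendsto_cosh_cocompact : Tendsto cosh (cocompact ℝ) atTop := by
  refine tendsto_atTop_mono (fun x => ?_)
    ((tendsto_exp_atTop.comp tendsto_norm_cocompact_atTop).atTop_div_const two_pos)
  rw [Function.comp_apply, norm_eq_abs, ← cosh_abs, cosh_eq]
  linarith [exp_pos (-|x|)]

theorem Real.tendsto_inv_cosh_sq_cocompact :
    Tendsto (fun x => (1 / cosh x) ^ 2) (cocompact ℝ) (𝓝 0) := by
  simpa using tendsto_cosh_cocompact.inv_tendsto_atTop.pow 2

theorem log_soliton_ratio_ne_zero {b : ℝ} (hb0 : b ≠ 0) (hbhalf : b ≠ 1 / 2) (hb1 : b ≠ 1)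
    (s : ℝ) : log ((s ^ 2 + (b - 1) ^ 2) / (s ^ 2 + b ^ 2)) ≠ 0 := by
  have hnum : 0 < s ^ 2 + (b - 1) ^ 2 := by
    have := sub_ne_zero.mpr hb1
    positivity
  have hden : 0 < s ^ 2 + b ^ 2 := by positivity
  refine log_ne_zero_of_pos_of_ne_one (div_pos hnum hden) (div_ne_one_of_ne fun h => hbhalf ?_)
  linear_combination (-1 / 2 : ℝ) * h

theorem one_soliton_spatial_decay_general (a₀ b₀ c₀ : ℝ)
    (hb0 : b₀ ≠ 0) (hbhalf : b₀ ≠ 1 / 2) (hb1 : b₀ ≠ 1)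
    (H Λ : ℝ → ℝ) (F : ℝ → ℝ → ℝ)
    (hH : ∀ t : ℝ, H t = Real.log
      (((t + a₀) ^ 2 + (b₀ - 1) ^ 2) / ((t + a₀) ^ 2 + b₀ ^ 2)))
    (hF : ∀ n t : ℝ, F n t = Λ t * (1 / Real.cosh ((n / 2) * H t + 2 * c₀)) ^ 2) :
    ∀ t : ℝ, H t ≠ 0
      ∧ Tendsto (fun n : ℝ => F n t) atTop (nhds 0)
      ∧ Tendsto (fun n : ℝ => F n t) atBot (nhds 0) := by
  intro t
  have hHt : H t ≠ 0 := hH t ▸ log_soliton_ratio_ne_zero hb0 hbhalf hb1 (t + a₀)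
  have harg : Tendsto (fun n : ℝ => (n / 2) * H t + 2 * c₀) (cocompact ℝ) (cocompact ℝ) := by
    convert tendsto_affine_cocompact (div_ne_zero hHt two_ne_zero) (2 * c₀) using 2
    ring
  have hdecay : Tendsto (fun n => F n t) (cocompact ℝ) (𝓝 0) := by
    simpa only [hF, Function.comp_def, mul_zero] using (tendsto_inv_cosh_sq_cocompact.comp harg).const_mul (Λ t)
  exact ⟨hHt, hdecay.mono_left atTop_le_cocompact, hdecay.mono_left atBot_le_cocompact⟩

/-- Spatial localization of the 1-soliton: for every fixed time `t` the inverse width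
`H(t)` is nonzero and `F(n,t) → 0` as `n → ±∞`. -/
theorem one_soliton_spatial_decay (a₀ b₀ c₀ : ℝ)
    (hb0 : b₀ ≠ 0) (hbhalf : b₀ ≠ 1 / 2) (hb1 : b₀ ≠ 1)
    (H Λ : ℝ → ℝ) (F : ℝ → ℝ → ℝ)
    (hH : ∀ t : ℝ, H t = Real.log
      (((t + a₀) ^ 2 + (b₀ - 1) ^ 2) / ((t + a₀) ^ 2 + b₀ ^ 2)))
    (hΛ : ∀ t : ℝ, Λ t = (1 - 2 * b₀) ^ 2
      / (4 * ((t + a₀) ^ 2 + b₀ ^ 2) * ((t + a₀) ^ 2 + (b₀ - 1) ^ 2)))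
    (hF : ∀ n t : ℝ, F n t = Λ t * (1 / Real.cosh ((n / 2) * H t + 2 * c₀)) ^ 2) :
    ∀ t : ℝ, H t ≠ 0
      ∧ Tendsto (fun n : ℝ => F n t) atTop (nhds 0)
      ∧ Tendsto (fun n : ℝ => F n t) atBot (nhds 0) :=
  one_soliton_spatial_decay_general a₀ b₀ c₀ hb0 hbhalf hb1 H Λ F hH hF
end
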